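/- Equivalence of Rule 2 of po-calculus and Rule 2 of do-calculus: let G be an ADMG with vertex set V and let Y, Z, W, X be disjoint subsets of V. Then (Y(x,z) ⊥ Z(x,z) | W(x,z))_{G(x,z)} holds in the SWIG G(x,z) if and only if (Y ⊥_m Z | W ∪ X)_{G_{X̄,Z̲}} holds, where G_{X̄,Z̲} is G with every edge carrying an arrowhead at a vertex of X removed and every directed edge out of Z removed. -/

import Mathlib

/-! ### Mixed graphs, walks, m-separation, SWIGs -/

/-- An acyclic directed mixed graph (directedness data; acyclicity is stated separately). -/
structure MixedGraph (V : Type) where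
  /-- directed edges `i → j` -/
  dir : V → V → Prop
  /-- bidirected edges `i ↔ j` -/
  bi : V → V → Prop
  bi_symm : ∀ i j, bi i j → bi j i

namespace MixedGraph

variable {V : Type}

/-- There is no directed cycle. -/
def Acyclic (G : MixedGraph V) : Prop := ∀ v, ¬ Relation.TransGen G.dir v v

/-- `v` is a descendant of `s` (reflexively). -/
def Desc (G : MixedGraph V) (s v : V) : Prop := Relation.ReflTransGen G.dir s v

/-- The set of ancestors of the set `W` (including `W` itself). -/
def AncSet (G : MixedGraph V) (W : Set V) : Set V := {v | ∃ w ∈ W, Relation.ReflTransGen G.dir v w}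

/-- There is an edge between `a` and `b` carrying an arrowhead at `a` iff `ha = true`
and an arrowhead at `b` iff `hb = true`. -/
def Step (G : MixedGraph V) (a b : V) (ha hb : Bool) : Prop :=
  match ha, hb with
  | false, true => G.dir a b
  | true, false => G.dir b a
  | true, true => G.bi a b
  | false, false => False

/-- Walks (with at least one edge) in a mixed graph, remembering arrowhead marks. -/
inductive Walk (G : MixedGraph V) : V → V → Type where
  | single {a b : V} (ha hb : Bool) (h : G.Step a b ha hb) : Walk G a b
  | cons {a b c : V} (ha hb : Bool) (h : G.Step a b ha hb) (w : Walk G b c) : Walk G a c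

/-- The arrowhead mark at the first vertex of a walk. -/
def Walk.firstArrow {G : MixedGraph V} : ∀ {x y : V}, Walk G x y → Bool
  | _, _, .single ha _ _ => ha
  | _, _, .cons ha _ _ _ => ha

/-- The list of vertices visited by a walk. -/
def Walk.support {G : MixedGraph V} : ∀ {x y : V}, Walk G x y → List V
  | x, y, .single _ _ _ => [x, y]
  | x, _, .cons _ _ _ w => x :: w.support

/-- A walk is a path if it has no repeated vertices. -/
def Walk.IsPath {G : MixedGraph V} {x y : V} (w : Walk G x y) : Prop := w.support.Nodup

/-- A walk is blocked by the set `C` if some intermediate vertex of it is a non-collider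
belonging to `C`, or a collider without descendants in `C`. -/
def Walk.Blocked (G : MixedGraph V) (C : Set V) : ∀ {x y : V}, Walk G x y → Prop
  | _, _, .single _ _ _ => False
  | _, _, .cons (b := b) _ hb _ w =>
      (if hb = true ∧ w.firstArrow = true then ∀ d, G.Desc b d → d ∉ C else b ∈ C)
        ∨ Walk.Blocked G C w

/-- The intermediate (non-endpoint) vertices of a walk. -/
def Walk.inner {G : MixedGraph V} : ∀ {x y : V}, Walk G x y → List V
  | _, _, .single _ _ _ => []
  | _, _, .cons (b := b) _ _ _ w => b :: w.inner

/-- m-separation relative to a set `R`: every path from `Y` to `Z` all of whose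
non-endpoint vertices lie in `R` is blocked by `C`.  (In a SWIG, `R` is taken to be the
set of random vertices.) -/
def MSepIn (G : MixedGraph V) (R : Set V) (Y Z C : Set V) : Prop :=
  ∀ y ∈ Y, ∀ z ∈ Z, ∀ w : G.Walk y z, w.IsPath → (∀ v ∈ w.inner, v ∈ R) →
    Walk.Blocked G C w

/-- m-separation: every path from `Y` to `Z` is blocked by `C`. -/
def MSep (G : MixedGraph V) (Y Z C : Set V) : Prop :=
  MSepIn G Set.univ Y Z C

/-- The single world intervention graph obtained by splitting every vertex in `A`
into a random half `Sum.inl` (inheriting all edges with an arrowhead at it) and a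
fixed half `Sum.inr` (inheriting all outgoing directed edges).  Vertices `Sum.inl i`
are the random vertices; vertices `Sum.inr i` for `i ∈ A` are the fixed vertices
(`Sum.inr i` for `i ∉ A` is an isolated junk vertex). -/
def swig (G : MixedGraph V) (A : Set V) : MixedGraph (V ⊕ V) where
  dir x y :=
    match x, y with
    | Sum.inl i, Sum.inl j => G.dir i j ∧ i ∉ A
    | Sum.inr i, Sum.inl j => G.dir i j ∧ i ∈ A
    | _, _ => False
  bi x y :=
    match x, y with
    | Sum.inl i, Sum.inl j => G.bi i j
    | _, _ => False
  bi_symm := by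
    rintro (i | i) (j | j) h
    · exact G.bi_symm i j h
    · exact False.elim h
    · exact False.elim h
    · exact False.elim h

/-- `G` with all edges carrying an arrowhead at a vertex of `X` removed (Pearl's `G_{X̄}`). -/
def removeInto (G : MixedGraph V) (X : Set V) : MixedGraph V where
  dir i j := G.dir i j ∧ j ∉ X
  bi i j := G.bi i j ∧ i ∉ X ∧ j ∉ X
  bi_symm := fun i j h => ⟨G.bi_symm i j h.1, h.2.2, h.2.1⟩

/-- `G` with all directed edges out of a vertex of `Z` removed (Pearl's `G_{Z̲}`). -/
def removeOut (G : MixedGraph V) (Z : Set V) : MixedGraph V where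
  dir i j := G.dir i j ∧ i ∉ Z
  bi := G.bi
  bi_symm := G.bi_symm

end MixedGraph

namespace MixedGraph

variable {V : Type}

lemma Walk.support_eq {G : MixedGraph V} {x y : V} (w : G.Walk x y) :
    w.support = x :: (w.inner ++ [y]) := by
  induction w with
  | single ha hb h => rfl
  | cons ha hb h w ih => simp [Walk.support, Walk.inner, ih]

lemma Walk.firstArrow_spec {G : MixedGraph V} {x y : V} (w : G.Walk x y) :
    ∃ c hc, G.Step x c w.firstArrow hc := by
  cases w with
  | single ha hb h => exact ⟨_, _, h⟩
  | cons ha hb h w => exact ⟨_, _, h⟩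

/-- If some inner vertex of a walk blocks it "locally regardless", the walk is blocked. -/
lemma blocked_of_inner {G : MixedGraph V} {C S : Set V}
    (hloc : ∀ b ∈ S, ∀ (hb hb' : Bool),
      (∃ a ha, G.Step a b ha hb) → (∃ c hc, G.Step b c hb' hc) →
      if hb = true ∧ hb' = true then ∀ d, G.Desc b d → d ∉ C else b ∈ C) :
    ∀ {x y : V} (w : G.Walk x y), (∃ b ∈ w.inner, b ∈ S) → Walk.Blocked G C w := by
  intro x y w
  induction w with
  | single ha hb h =>
    rintro ⟨b, hbmem, -⟩
    simp [Walk.inner] at hbmem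
  | cons ha hb h w ih =>
    rintro ⟨v, hv, hvS⟩
    rw [Walk.inner, List.mem_cons] at hv
    simp only [Walk.Blocked]
    rcases hv with rfl | hv
    · left
      obtain ⟨c, hc, hstep⟩ := w.firstArrow_spec
      exact hloc v hvS hb w.firstArrow ⟨_, _, h⟩ ⟨_, _, hstep⟩
    · exact Or.inr (ih ⟨v, hv, hvS⟩)

/-- Generic transfer of walks along a vertex map. -/
lemma exists_map {V₁ V₂ : Type} {G₁ : MixedGraph V₁} {G₂ : MixedGraph V₂}
    (f : V₁ → V₂) (Q : Set V₁) (C₁ : Set V₁) (C₂ : Set V₂)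
    (hstep : ∀ a b ha hb, a ∈ Q → b ∈ Q → G₁.Step a b ha hb → G₂.Step (f a) (f b) ha hb)
    (hC : ∀ b ∈ Q, f b ∈ C₂ → b ∈ C₁)
    (hdesc : ∀ b ∈ Q, (∀ d, G₂.Desc (f b) d → d ∉ C₂) → ∀ d, G₁.Desc b d → d ∉ C₁) :
    ∀ {x y : V₁} (w : G₁.Walk x y), (∀ v ∈ w.support, v ∈ Q) →
      ∃ w' : G₂.Walk (f x) (f y),
        w'.support = w.support.map f ∧ w'.firstArrow = w.firstArrow ∧
        w'.inner = w.inner.map f ∧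
        (Walk.Blocked G₂ C₂ w' → Walk.Blocked G₁ C₁ w) := by
  intro x y w
  induction w with
  | @single a b ha hb h =>
    intro hQ
    have hx : a ∈ Q := hQ a (by simp [Walk.support])
    have hy : b ∈ Q := hQ b (by simp [Walk.support])
    exact ⟨.single ha hb (hstep _ _ _ _ hx hy h), by simp [Walk.support], rfl,
      by simp [Walk.inner], fun hbl => hbl.elim⟩
  | @cons a b c ha hb h w ih =>
    intro hQ
    have haQ : a ∈ Q := hQ a (by simp [Walk.support])
    have hbQ : b ∈ Q := hQ _ (by
      rw [Walk.support]
      exact List.mem_cons_of_mem _ (by rw [Walk.support_eq]; exact List.mem_cons_self))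
    obtain ⟨w', hs, hf, hi, hblk⟩ :=
      ih (fun v hv => hQ v (by rw [Walk.support]; exact List.mem_cons_of_mem _ hv))
    refine ⟨.cons ha hb (hstep _ _ _ _ haQ hbQ h) w', by simp [Walk.support, hs], rfl,
      by simp [Walk.inner, hi], ?_⟩
    intro hbl
    simp only [Walk.Blocked] at hbl ⊢
    rcases hbl with h1 | h2
    · left
      rw [hf] at h1
      by_cases hcond : hb = true ∧ w.firstArrow = true
      · rw [if_pos hcond] at h1 ⊢
        exact hdesc b hbQ h1
      · rw [if_neg hcond] at h1 ⊢
        exact hC b hbQ h1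
    · exact Or.inr (hblk h2)

section helpers

variable (G : MixedGraph V) (X Z : Set V)

lemma descH2toH1 {b d : V} (hb : b ∉ X)
    (h : Relation.ReflTransGen ((G.removeOut Z).removeInto X).dir b d) :
    d ∉ X ∧ Relation.ReflTransGen (G.removeOut (X ∪ Z)).dir b d := by
  induction h with
  | refl => exact ⟨hb, .refl⟩
  | tail p step ih =>
    obtain ⟨hm, p'⟩ := ih
    exact ⟨step.2, p'.tail ⟨step.1.1, by rintro (h' | h'); exacts [hm h', step.1.2 h']⟩⟩

lemma descH1toH2 {b d : V}
    (h : Relation.ReflTransGen (G.removeOut (X ∪ Z)).dir b d) :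
    d ∉ X → Relation.ReflTransGen ((G.removeOut Z).removeInto X).dir b d := by
  induction h with
  | refl => intro _; exact .refl
  | tail p step ih =>
    intro hd
    exact (ih (fun hx => step.2 (Or.inl hx))).tail ⟨⟨step.1, fun hz => step.2 (Or.inr hz)⟩, hd⟩

lemma descSwigToH1 {b : V} {d : V ⊕ V}
    (h : Relation.ReflTransGen (G.swig (X ∪ Z)).dir (Sum.inl b) d) :
    ∃ d', d = Sum.inl d' ∧ Relation.ReflTransGen (G.removeOut (X ∪ Z)).dir b d' := by
  induction h with
  | refl => exact ⟨b, rfl, .refl⟩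
  | @tail m dd p step ih =>
    obtain ⟨m', rfl, p'⟩ := ih
    cases dd with
    | inl d' => exact ⟨d', rfl, p'.tail step⟩
    | inr d' => exact step.elim

lemma blockedH1 (W : Set V) (hZW : Disjoint Z W) (hWX : Disjoint W X)
    {x y : V} (w : (G.removeOut (X ∪ Z)).Walk x y) (hhit : ∃ b ∈ w.inner, b ∈ X ∪ Z) :
    Walk.Blocked (G.removeOut (X ∪ Z)) W w := by
  refine blocked_of_inner ?_ w hhit
  rintro b hbS hb hb' ⟨a, ha, s1⟩ ⟨c, hc, s2⟩
  have e1 : hb = true := by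
    cases hb
    · cases ha
      · exact s1.elim
      · exact absurd hbS s1.2
    · rfl
  have e2 : hb' = true := by
    cases hb'
    · cases hc
      · exact s2.elim
      · exact absurd hbS s2.2
    · rfl
  subst e1; subst e2
  rw [if_pos ⟨rfl, rfl⟩]
  intro d hd hdW
  rcases Relation.ReflTransGen.cases_head hd with rfl | ⟨m, s, -⟩
  · rcases hbS with hbX | hbZ
    · exact Set.disjoint_left.mp hWX hdW hbX
    · exact Set.disjoint_left.mp hZW hbZ hdW
  · exact s.2 hbS

lemma blockedH2 (W : Set V) (hZW : Disjoint Z W) (hZX : Disjoint Z X)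
    {x y : V} (w : ((G.removeOut Z).removeInto X).Walk x y) (hhit : ∃ b ∈ w.inner, b ∈ X ∪ Z) :
    Walk.Blocked ((G.removeOut Z).removeInto X) (W ∪ X) w := by
  refine blocked_of_inner ?_ w hhit
  rintro b hbS hb hb' ⟨a, ha, s1⟩ ⟨c, hc, s2⟩
  rcases hbS with hbX | hbZ
  · have e1 : hb = false := by
      cases hb
      · rfl
      · cases ha
        · exact absurd hbX s1.2
        · exact absurd hbX s1.2.2
    subst e1
    rw [if_neg (by simp)]
    exact Or.inr hbX
  · have e1 : hb = true := by
      cases hb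
      · cases ha
        · exact s1.elim
        · exact absurd hbZ s1.1.2
      · rfl
    have e2 : hb' = true := by
      cases hb'
      · cases hc
        · exact s2.elim
        · exact absurd hbZ s2.1.2
      · rfl
    subst e1; subst e2
    rw [if_pos ⟨rfl, rfl⟩]
    intro d hd hdWX
    rcases Relation.ReflTransGen.cases_head hd with rfl | ⟨m, s, -⟩
    · rcases hdWX with hdW | hdX
      · exact Set.disjoint_left.mp hZW hbZ hdW
      · exact Set.disjoint_left.mp hZX hbZ hdX
    · exact s.1.2 hbZ

end helpers

/-- SWIG separation is equivalent to m-separation in `G` with all directed edges out of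
`X ∪ Z` removed, given `W`. -/
lemma auxL (G : MixedGraph V) (Y Z W X : Set V) :
    MSepIn (G.swig (X ∪ Z)) (Set.range Sum.inl) (Sum.inl '' Y) (Sum.inl '' Z) (Sum.inl '' W) ↔
      MSep (G.removeOut (X ∪ Z)) Y Z W := by
  constructor
  · intro hL y hy z hz w hpath _
    obtain ⟨w', hs, -, hi, hblk⟩ :=
      exists_map (G₁ := G.removeOut (X ∪ Z)) (G₂ := G.swig (X ∪ Z))
        Sum.inl Set.univ W (Sum.inl '' W)
        (fun a b ha hb _ _ s => by cases ha <;> cases hb <;> exact s)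
        (fun b _ hmem => by obtain ⟨b', hb', heq⟩ := hmem; cases Sum.inl_injective heq; exact hb')
        (fun b _ hno d hd hdW =>
          hno (Sum.inl d) (Relation.ReflTransGen.lift (p := (G.swig (X ∪ Z)).dir) Sum.inl (fun a c h' => h') _ _ hd)
            ⟨d, hdW, rfl⟩)
        w (fun v _ => trivial)
    apply hblk
    apply hL _ ⟨y, hy, rfl⟩ _ ⟨z, hz, rfl⟩ w'
    · show List.Nodup (Walk.support w')
      rw [hs]
      exact List.Nodup.map Sum.inl_injective hpath
    · intro v hv
      rw [hi] at hv
      obtain ⟨u, -, rfl⟩ := List.mem_map.mp hv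
      exact ⟨u, rfl⟩
  · rintro hCore ys ⟨y, hy, rfl⟩ zs ⟨z, hz, rfl⟩ w hpath hinner
    have hsupp : ∀ v ∈ w.support, v ∈ Set.range Sum.inl := by
      intro v hv
      rw [Walk.support_eq] at hv
      rcases List.mem_cons.mp hv with rfl | hv
      · exact ⟨y, rfl⟩
      rcases List.mem_append.mp hv with hv | hv
      · exact hinner v hv
      · rw [List.mem_singleton.mp hv]; exact ⟨z, rfl⟩
    obtain ⟨w', hs, -, -, hblk⟩ :=
      exists_map (G₁ := G.swig (X ∪ Z)) (G₂ := G.removeOut (X ∪ Z))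
        (Sum.elim id id) (Set.range Sum.inl) (Sum.inl '' W) W
        (fun a b ha hb haQ hbQ s => by
          obtain ⟨a', rfl⟩ := haQ
          obtain ⟨b', rfl⟩ := hbQ
          cases ha <;> cases hb <;> exact s)
        (fun b hbQ hmem => by obtain ⟨b', rfl⟩ := hbQ; exact ⟨b', hmem, rfl⟩)
        (fun b hbQ hno d hd hdC => by
          obtain ⟨b', rfl⟩ := hbQ
          obtain ⟨d', hd'W, rfl⟩ := hdC
          obtain ⟨d'', heq, p⟩ := descSwigToH1 G X Z hd
          obtain rfl : d' = d'' := Sum.inl_injective heq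
          exact hno _ p hd'W)
        w hsupp
    apply hblk
    apply hCore y hy z hz w'
    · show List.Nodup (Walk.support w')
      rw [hs]
      refine List.Nodup.map_on ?_ hpath
      intro u hu v hv heq
      obtain ⟨u', rfl⟩ := hsupp u hu
      obtain ⟨v', rfl⟩ := hsupp v hv
      simpa using heq
    · exact fun v _ => trivial

/-- do-calculus side is equivalent to the same intermediate statement. -/
lemma auxR (G : MixedGraph V) (Y Z W X : Set V)
    (hYX : Disjoint Y X) (hZW : Disjoint Z W) (hZX : Disjoint Z X) (hWX : Disjoint W X) :
    MSep ((G.removeOut Z).removeInto X) Y Z (W ∪ X) ↔ MSep (G.removeOut (X ∪ Z)) Y Z W := by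
  constructor
  · intro hR y hy z hz w hpath _
    by_cases hhit : ∃ b ∈ w.inner, b ∈ X ∪ Z
    · exact blockedH1 G X Z W hZW hWX w hhit
    · push_neg at hhit
      have hsupp : ∀ v ∈ w.support, v ∈ {v | v ∉ X} := by
        intro v hv
        rw [Walk.support_eq] at hv
        rcases List.mem_cons.mp hv with rfl | hv
        · exact Set.disjoint_left.mp hYX hy
        rcases List.mem_append.mp hv with hv | hv
        · exact fun hx => hhit v hv (Or.inl hx)
        · rw [List.mem_singleton.mp hv]; exact Set.disjoint_left.mp hZX hz
      obtain ⟨w', hs, -, -, hblk⟩ :=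
        exists_map (G₁ := G.removeOut (X ∪ Z)) (G₂ := (G.removeOut Z).removeInto X)
          id {v | v ∉ X} W (W ∪ X)
          (fun a b ha hb haQ hbQ s => by
            cases ha <;> cases hb
            · exact s.elim
            · exact ⟨⟨s.1, fun h' => s.2 (Or.inr h')⟩, hbQ⟩
            · exact ⟨⟨s.1, fun h' => s.2 (Or.inr h')⟩, haQ⟩
            · exact ⟨s, haQ, hbQ⟩)
          (fun b hbQ hmem => hmem.resolve_right hbQ)
          (fun b hbQ hno d hd hdW =>
            hno d (descH1toH2 G X Z hd (fun hx => Set.disjoint_left.mp hWX hdW hx))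
              (Or.inl hdW))
          w hsupp
      apply hblk
      apply hR y hy z hz w'
      · show List.Nodup (Walk.support w')
        rw [hs, List.map_id]; exact hpath
      · exact fun v _ => trivial
  · intro hCore y hy z hz w hpath _
    by_cases hhit : ∃ b ∈ w.inner, b ∈ X ∪ Z
    · exact blockedH2 G X Z W hZW hZX w hhit
    · push_neg at hhit
      have hsupp : ∀ v ∈ w.support, v ∈ {v | v ∉ X} := by
        intro v hv
        rw [Walk.support_eq] at hv
        rcases List.mem_cons.mp hv with rfl | hv
        · exact Set.disjoint_left.mp hYX hy
        rcases List.mem_append.mp hv with hv | hv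
        · exact fun hx => hhit v hv (Or.inl hx)
        · rw [List.mem_singleton.mp hv]; exact Set.disjoint_left.mp hZX hz
      obtain ⟨w', hs, -, -, hblk⟩ :=
        exists_map (G₁ := (G.removeOut Z).removeInto X) (G₂ := G.removeOut (X ∪ Z))
          id {v | v ∉ X} (W ∪ X) W
          (fun a b ha hb haQ hbQ s => by
            cases ha <;> cases hb
            · exact s.elim
            · exact ⟨s.1.1, by rintro (h' | h'); exacts [haQ h', s.1.2 h']⟩
            · exact ⟨s.1.1, by rintro (h' | h'); exacts [hbQ h', s.1.2 h']⟩
            · exact s.1)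
          (fun b hbQ hmem => Or.inl hmem)
          (fun b hbQ hno d hd hdWX => by
            obtain ⟨hdX, p⟩ := descH2toH1 G X Z hbQ hd
            exact hno d p (hdWX.resolve_right hdX))
          w hsupp
      apply hblk
      apply hCore y hy z hz w'
      · show List.Nodup (Walk.support w')
        rw [hs, List.map_id]; exact hpath
      · exact fun v _ => trivial

end MixedGraph
open MixedGraph in
/-- **Equivalence of Rule 2 of po-calculus and Rule 2 of do-calculus**: for an ADMG `G` and
disjoint `Y, Z, W, X ⊆ V`, `(Y(x,z) ⊥ Z(x,z) | W(x,z))` holds in the SWIG `G(x,z)` iff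
`(Y ⊥_m Z | W ∪ X)` holds in `G_{X̄,Z̲}` (all edges with an arrowhead at `X` and all
directed edges out of `Z` removed). -/
theorem rule2_po_iff_do {V : Type} (G : MixedGraph V) (hacyc : G.Acyclic)
    (Y Z W X : Set V)
    (hYZ : Disjoint Y Z) (hYW : Disjoint Y W) (hYX : Disjoint Y X)
    (hZW : Disjoint Z W) (hZX : Disjoint Z X) (hWX : Disjoint W X) :
    MSepIn (G.swig (X ∪ Z)) (Set.range Sum.inl) (Sum.inl '' Y) (Sum.inl '' Z) (Sum.inl '' W) ↔
      MSep ((G.removeOut Z).removeInto X) Y Z (W ∪ X) := by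
  exact (auxL G Y Z W X).trans (auxR G Y Z W X hYX hZW hZX hWX).symm
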